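/- Let N ≥ 2, let λ_1,…,λ_{N²−1} be N×N complex matrices that are Hermitian, traceless and satisfy Tr[λ_μ λ_ν] = 2δ_{μν}, and let a_1,…,a_{N²} be unit vectors in ℝ^{N²−1} with a_i · a_j = −1/(N²−1) for all i ≠ j. For real numbers r, s and each i define R_i(r) = (1/N)·I + (r/2)·Σ_μ (a_i)_μ λ_μ and S_i(s) = (1/N)·I + (s/2)·Σ_μ (a_i)_μ λ_μ. Then Σ_{i=1}^{N²} (1/N²)·R_i(r) ⊗ S_i(s)ᵀ = (1/N²)·I⊗I + (r·s/(4(N²−1)))·Σ_{μ=1}^{N²−1} λ_μ ⊗ λ_μᵀ, where ⊗ denotes the Kronecker product and Aᵀ is the transpose of A. -/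

import Mathlib

/-!
Write `n` for the number of vertices and `d = n - 1` for the dimension. The Gram matrix of a
regular simplex is `A Aᵀ = (1 + e) I - e J` with `e = 1/(n - 1)`; its rows sum to zero, so the
vertices sum to zero, i.e. `Aᵀ J = 0`. Hence the frame operator `F = Aᵀ A` satisfies
`F² = Aᵀ (A Aᵀ) A = (1 + e) F`, and with `tr F = n` and `c = 1 + e = n/d` this gives
`tr (F - c I)² = c (c d - n) = 0`, so `Σ_i a_i a_iᵀ = (n/d) I`. Expanding `R_i ⊗ S_iᵀ`
bilinearly, the terms linear in `a_i` cancel because the vertices sum to zero, and the quadratic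
term becomes `(n/d) Σ_μ λ_μ ⊗ λ_μᵀ`.
-/

open Matrix BigOperators
open scoped Kronecker

namespace Matrix

variable {ι κ : Type*} [Fintype ι] [Fintype κ]

/-- The rows of `A` are the vertices of the simplex. -/
def IsRegularSimplex (A : Matrix ι κ ℝ) : Prop :=
  (∀ i, ∑ μ, A i μ ^ 2 = 1) ∧
    ∀ i j, i ≠ j → ∑ μ, A i μ * A j μ = -1 / ((Fintype.card ι : ℝ) - 1)

namespace IsRegularSimplex

variable {A : Matrix ι κ ℝ}

theorem mul_transpose_self [DecidableEq ι] (hA : A.IsRegularSimplex) :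
    A * Aᵀ = (1 + ((Fintype.card ι : ℝ) - 1)⁻¹) • 1 -
      ((Fintype.card ι : ℝ) - 1)⁻¹ • of fun _ _ => 1 := by
  ext i j
  simp only [mul_apply, transpose_apply, sub_apply, smul_apply, one_apply, of_apply, smul_eq_mul]
  split_ifs with h
  · subst h
    simpa [sq] using hA.1 i
  · rw [hA.2 i j h]
    ring

theorem sum_eq_zero (hA : A.IsRegularSimplex) (hι : Fintype.card ι ≠ 1) (μ : κ) :
    ∑ i, A i μ = 0 := by
  classical
  have hrow : ∀ i, ∑ j, (A * Aᵀ) i j = 0 := by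
    intro i
    have : (Fintype.card ι : ℝ) - 1 ≠ 0 := sub_ne_zero.2 (by exact_mod_cast hι)
    simp [hA.mul_transpose_self, sub_apply, Finset.sum_sub_distrib, one_apply]
    field_simp
    ring
  have hsq : ∑ ν, (∑ i, A i ν) ^ 2 = 0 :=
    calc ∑ ν, (∑ i, A i ν) ^ 2 = ∑ ν, ∑ i, ∑ j, A i ν * A j ν := by
          simp only [sq, Finset.sum_mul_sum]
      _ = ∑ i, ∑ j, (A * Aᵀ) i j := by
          rw [Finset.sum_comm]
          exact Finset.sum_congr rfl fun _ _ => Finset.sum_comm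
      _ = 0 := Finset.sum_eq_zero fun i _ => hrow i
  exact pow_eq_zero_iff two_ne_zero |>.1 <|
    (Finset.sum_eq_zero_iff_of_nonneg fun ν _ => sq_nonneg _).1 hsq μ (Finset.mem_univ μ)

theorem transpose_mul_self [DecidableEq κ] (hA : A.IsRegularSimplex)
    (hκ : Fintype.card κ + 1 = Fintype.card ι) :
    Aᵀ * A = ((Fintype.card ι : ℝ) / Fintype.card κ) • 1 := by
  classical
  obtain hd | hd := eq_or_ne (Fintype.card κ) 0
  · ext μ
    exact (Fintype.card_eq_zero_iff.1 hd).elim μ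
  set c : ℝ := (Fintype.card ι : ℝ) / Fintype.card κ
  have hJ : Aᵀ * (of fun _ _ => 1 : Matrix ι ι ℝ) = 0 := by
    ext μ j
    simp [mul_apply, hA.sum_eq_zero (by omega)]
  have hc : 1 + ((Fintype.card ι : ℝ) - 1)⁻¹ = c := by
    have : (Fintype.card κ : ℝ) ≠ 0 := by exact_mod_cast hd
    simp only [c, ← hκ, Nat.cast_add, Nat.cast_one, add_sub_cancel_right]
    field_simp
  have hsq : (Aᵀ * A) * (Aᵀ * A) = c • (Aᵀ * A) := by
    rw [show (Aᵀ * A) * (Aᵀ * A) = Aᵀ * (A * Aᵀ) * A by simp only [Matrix.mul_assoc],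
      hA.mul_transpose_self, hc, Matrix.mul_sub, Matrix.sub_mul, Matrix.mul_smul,
      Matrix.mul_smul, hJ]
    simp [Matrix.smul_mul]
  have htrace : (Aᵀ * A).trace = Fintype.card ι := by
    rw [trace_mul_comm]
    simp [trace, mul_apply, ← sq, hA.1]
  have hzero : ((Aᵀ * A - c • 1)ᴴ * (Aᵀ * A - c • 1)).trace = 0 := by
    have hsymm : (Aᵀ * A - c • 1)ᴴ = Aᵀ * A - c • 1 := by
      simp [conjTranspose_eq_transpose_of_trivial, transpose_mul]
    rw [hsymm, Matrix.sub_mul, Matrix.mul_sub, Matrix.mul_sub, hsq]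
    simp [htrace, c]
    field_simp
    ring
  rwa [trace_conjTranspose_mul_self_eq_zero_iff, sub_eq_zero] at hzero

end IsRegularSimplex

section Bilinear

variable {M M' P : Type*} [AddCommGroup M] [Module ℂ M] [AddCommGroup M'] [Module ℂ M']
  [AddCommGroup P] [Module ℂ P] {A : Matrix ι κ ℝ}

theorem sum_sum_smul_eq_zero (hA : ∀ μ, ∑ i, A i μ = 0) (X : κ → M) :
    ∑ i, ∑ μ, (A i μ : ℂ) • X μ = 0 := by
  rw [Finset.sum_comm]
  simp [← Finset.sum_smul, hA]

theorem sum_bilin_sum_smul_of_transpose_mul_self [DecidableEq κ] {c : ℝ} (hA : Aᵀ * A = c • 1)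
    (B : M →ₗ[ℂ] M' →ₗ[ℂ] P) (X : κ → M) (Y : κ → M') :
    ∑ i, B (∑ μ, (A i μ : ℂ) • X μ) (∑ ν, (A i ν : ℂ) • Y ν) = (c : ℂ) • ∑ μ, B (X μ) (Y μ) :=
  calc ∑ i, B (∑ μ, (A i μ : ℂ) • X μ) (∑ ν, (A i ν : ℂ) • Y ν)
      = ∑ ν, ∑ μ, (((Aᵀ * A) μ ν : ℝ) : ℂ) • B (X μ) (Y ν) := by
        simp only [map_sum, map_smul, LinearMap.sum_apply, LinearMap.smul_apply, Finset.smul_sum,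
          smul_smul, mul_apply, transpose_apply, Complex.ofReal_sum, Complex.ofReal_mul,
          Finset.sum_smul]
        rw [Finset.sum_comm]
        refine Finset.sum_congr rfl fun ν _ => ?_
        rw [Finset.sum_comm]
        simp only [mul_comm]
    _ = ∑ μ, (c : ℂ) • B (X μ) (Y μ) := by simp [hA, one_apply]
    _ = (c : ℂ) • ∑ μ, B (X μ) (Y μ) := Finset.smul_sum.symm

theorem sum_bilin_add_smul [DecidableEq κ] {c : ℝ} (h0 : ∀ μ, ∑ i, A i μ = 0)
    (hA : Aᵀ * A = c • 1) (B : M →ₗ[ℂ] M' →ₗ[ℂ] P) (u : M) (v : M') (t t' : ℂ)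
    (X : κ → M) (Y : κ → M') :
    ∑ i, B (u + t • ∑ μ, (A i μ : ℂ) • X μ) (v + t' • ∑ μ, (A i μ : ℂ) • Y μ) =
      (Fintype.card ι : ℂ) • B u v + (t * t' * c) • ∑ μ, B (X μ) (Y μ) := by
  set x : ι → M := fun i => ∑ μ, (A i μ : ℂ) • X μ
  set y : ι → M' := fun i => ∑ μ, (A i μ : ℂ) • Y μ
  calc ∑ i, B (u + t • x i) (v + t' • y i)
      = ∑ i, (B u v + t' • B u (y i) + t • B (x i) v + (t * t') • B (x i) (y i)) := by
        refine Finset.sum_congr rfl fun i _ => ?_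
        simp only [map_add, map_smul, LinearMap.add_apply, LinearMap.smul_apply]
        module
    _ = (Fintype.card ι : ℂ) • B u v + t' • B u (∑ i, y i) + t • B (∑ i, x i) v +
          (t * t') • ∑ i, B (x i) (y i) := by
        simp only [Finset.sum_add_distrib, map_sum, LinearMap.sum_apply, Finset.smul_sum,
          Finset.sum_const, Finset.card_univ, Nat.cast_smul_eq_nsmul]
    _ = (Fintype.card ι : ℂ) • B u v + (t * t' * c) • ∑ μ, B (X μ) (Y μ) := by
        rw [sum_sum_smul_eq_zero h0, sum_sum_smul_eq_zero h0,
          sum_bilin_sum_smul_of_transpose_mul_self hA, smul_smul]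
        simp

end Bilinear

def kroneckerTransposeBilin (m n : Type*) :
    Matrix m m ℂ →ₗ[ℂ] Matrix n n ℂ →ₗ[ℂ] Matrix (m × n) (m × n) ℂ :=
  kroneckerBilinear.compl₂ (transposeLinearEquiv n n ℂ ℂ).toLinearMap

@[simp]
theorem kroneckerTransposeBilin_apply {m n : Type*} (X : Matrix m m ℂ) (Y : Matrix n n ℂ) :
    kroneckerTransposeBilin m n X Y = X ⊗ₖ Yᵀ :=
  rfl

end Matrix

theorem isotropic_simplex_decomposition_general (N : ℕ) (hN : 2 ≤ N)
    (lam : Fin (N ^ 2 - 1) → Matrix (Fin N) (Fin N) ℂ)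
    (a : Fin (N ^ 2) → Fin (N ^ 2 - 1) → ℝ)
    (hunit : ∀ i, ∑ μ, a i μ ^ 2 = 1)
    (hangle : ∀ i j, i ≠ j → ∑ μ, a i μ * a j μ = -1 / ((N : ℝ) ^ 2 - 1))
    (r s : ℝ) :
    ∑ i, ((1 : ℂ) / N ^ 2) •
        ((((1 : ℂ) / N) • (1 : Matrix (Fin N) (Fin N) ℂ) +
            ((r : ℂ) / 2) • ∑ μ, (a i μ : ℂ) • lam μ) ⊗ₖ
          (((1 : ℂ) / N) • (1 : Matrix (Fin N) (Fin N) ℂ) +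
            ((s : ℂ) / 2) • ∑ μ, (a i μ : ℂ) • lam μ)ᵀ)
      = ((1 : ℂ) / N ^ 2) •
          ((1 : Matrix (Fin N) (Fin N) ℂ) ⊗ₖ (1 : Matrix (Fin N) (Fin N) ℂ)) +
        (((r : ℂ) * s) / (4 * ((N : ℂ) ^ 2 - 1))) • ∑ μ, lam μ ⊗ₖ (lam μ)ᵀ := by
  have hN2 : 1 < N ^ 2 := Nat.one_lt_pow two_ne_zero (by omega)
  have hA : IsRegularSimplex (a : Matrix _ _ ℝ) := ⟨hunit, by simpa using hangle⟩
  have hcard : Fintype.card (Fin (N ^ 2 - 1)) + 1 = Fintype.card (Fin (N ^ 2)) := by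
    simp only [Fintype.card_fin]
    omega
  have key := sum_bilin_add_smul (hA.sum_eq_zero (by rw [Fintype.card_fin]; omega))
    (hA.transpose_mul_self hcard) (kroneckerTransposeBilin (Fin N) (Fin N))
    ((1 / N : ℂ) • 1) ((1 / N : ℂ) • 1) (r / 2) (s / 2) lam lam
  simp only [kroneckerTransposeBilin_apply] at key
  have hNC : (N : ℂ) ≠ 0 := by exact_mod_cast (by omega : N ≠ 0)
  have hd : (N : ℂ) ^ 2 - 1 ≠ 0 := sub_ne_zero.2 (by exact_mod_cast hN2.ne')
  rw [← Finset.smul_sum, key]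
  simp only [transpose_smul, transpose_one, smul_kronecker, kronecker_smul, smul_add, smul_smul,
    Fintype.card_fin]
  push_cast [Nat.cast_sub hN2.le]
  congr 2
  · field_simp
  · field_simp
    ring

/-- Decomposition of the isotropic state in Bloch
representation by an arbitrary regular simplex `a_1, …, a_{N²}` in `ℝ^{N²-1}`:
`Σ_i (1/N²) R_i(r) ⊗ S_i(s)ᵀ = (1/N²) I⊗I + (rs/(4(N²-1))) Σ_μ λ_μ ⊗ λ_μᵀ`. -/
theorem isotropic_simplex_decomposition (N : ℕ) (hN : 2 ≤ N)
    (lam : Fin (N ^ 2 - 1) → Matrix (Fin N) (Fin N) ℂ)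
    (hherm : ∀ μ, (lam μ).IsHermitian)
    (htraceless : ∀ μ, (lam μ).trace = 0)
    (horth : ∀ μ ν, (lam μ * lam ν).trace = if μ = ν then 2 else 0)
    (a : Fin (N ^ 2) → Fin (N ^ 2 - 1) → ℝ)
    (hunit : ∀ i, ∑ μ, a i μ ^ 2 = 1)
    (hangle : ∀ i j, i ≠ j → ∑ μ, a i μ * a j μ = -1 / ((N : ℝ) ^ 2 - 1))
    (r s : ℝ) :
    ∑ i, ((1 : ℂ) / N ^ 2) •
        ((((1 : ℂ) / N) • (1 : Matrix (Fin N) (Fin N) ℂ) +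
            ((r : ℂ) / 2) • ∑ μ, (a i μ : ℂ) • lam μ) ⊗ₖ
          (((1 : ℂ) / N) • (1 : Matrix (Fin N) (Fin N) ℂ) +
            ((s : ℂ) / 2) • ∑ μ, (a i μ : ℂ) • lam μ)ᵀ)
      = ((1 : ℂ) / N ^ 2) •
          ((1 : Matrix (Fin N) (Fin N) ℂ) ⊗ₖ (1 : Matrix (Fin N) (Fin N) ℂ)) +
        (((r : ℂ) * s) / (4 * ((N : ℂ) ^ 2 - 1))) • ∑ μ, lam μ ⊗ₖ (lam μ)ᵀ :=
  isotropic_simplex_decomposition_general N hN lam a hunit hangle r s
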